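/- arXiv:1705.08493 — 2 statements merged into one kernel-verified Lean document; each statement's English description precedes it below -/
import Mathlib

section
/- Let B be a left brace. For every positive integer n, d_n(B) ⊆ B^{n+1} and d_n(B) ⊆ B^{(n+1)}. Consequently, every left nilpotent left brace is solvable, and every right nilpotent left brace is solvable. -/
/-- A sub-brace of a left brace `B`. -/
def IsSubBrace {B : Type*} [AddCommGroup B] [Group B] (H : Set B) : Prop :=
  (0 : B) ∈ H ∧ (∀ x ∈ H, ∀ y ∈ H, x + y ∈ H) ∧ (∀ x ∈ H, -x ∈ H) ∧
    (∀ x ∈ H, ∀ y ∈ H, x * y ∈ H) ∧ (∀ x ∈ H, x⁻¹ ∈ H)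

/-- `IsSolvableIn S`: the sub-brace `S` of `B` is a solvable left brace. -/
def IsSolvableIn {B : Type*} [AddCommGroup B] [Group B] (S : Set B) : Prop :=
  ∃ (m : ℕ) (C : ℕ → Set B),
    C 0 = {(0 : B)} ∧ C m = S ∧ (∀ i ≤ m, IsSubBrace (C i)) ∧
    ∀ i < m,
      C i ⊆ C (i + 1) ∧
      (∀ x ∈ C (i + 1), ∀ y ∈ C i, x * y * x⁻¹ ∈ C i) ∧
      (∀ x ∈ C (i + 1), ∀ y ∈ C i, x * y - x ∈ C i) ∧
      (∀ x ∈ C (i + 1), ∀ y ∈ C (i + 1), x * y - x - y ∈ C i)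

/-- `X*Y`: the additive subgroup of `B` generated by all `x*y := x·y − x − y`,
`x ∈ X`, `y ∈ Y`. -/
def starSpan (B : Type*) [AddCommGroup B] [Group B] (X Y : Set B) : AddSubgroup B :=
  AddSubgroup.closure {z : B | ∃ x ∈ X, ∃ y ∈ Y, z = x * y - x - y}

/-- `dSeries B k` corresponds to `d_{k+1}(B)`: `d_1(B) = B*B`, `d_{i+1}(B) = d_i(B)*d_i(B)`. -/
def dSeries (B : Type*) [AddCommGroup B] [Group B] : ℕ → AddSubgroup B
  | 0 => starSpan B Set.univ Set.univ
  | k + 1 => starSpan B (dSeries B k) (dSeries B k)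

/-- `leftSeries B k` corresponds to `B^{k+1}`: `B^1 = B` and `B^{n+1} = B*B^n`. -/
def leftSeries (B : Type*) [AddCommGroup B] [Group B] : ℕ → AddSubgroup B
  | 0 => ⊤
  | k + 1 => starSpan B Set.univ (leftSeries B k)

/-- `rightSeries B k` corresponds to `B^{(k+1)}`: `B^{(1)} = B` and `B^{(n+1)} = B^{(n)}*B`. -/
def rightSeries (B : Type*) [AddCommGroup B] [Group B] : ℕ → AddSubgroup B
  | 0 => ⊤
  | k + 1 => starSpan B (rightSeries B k) Set.univ

section BraceAux

variable {B : Type*} [AddCommGroup B] [Group B]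

lemma star_mem_starSpan {X Y : Set B} {x y : B} (hx : x ∈ X) (hy : y ∈ Y) :
    x * y - x - y ∈ starSpan B X Y :=
  AddSubgroup.subset_closure ⟨x, hx, y, hy, rfl⟩

lemma starSpan_mono {X X' Y Y' : Set B} (hX : X ⊆ X') (hY : Y ⊆ Y') :
    starSpan B X Y ≤ starSpan B X' Y' :=
  AddSubgroup.closure_mono (fun z hz => by
    obtain ⟨x, hx, y, hy, h⟩ := hz
    exact ⟨x, hX hx, y, hY hy, h⟩)

variable (hB : ∀ a b c : B, a * (b + c) + a = a * b + a * c)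
include hB

lemma brace_mul_add (a u v : B) : a * (u + v) = a * u + a * v - a :=
  eq_sub_of_add_eq (hB a u v)

lemma brace_mul_zero (a : B) : a * 0 = a := by
  have h := hB a 0 0
  rw [add_zero] at h
  exact (add_left_cancel h).symm

lemma brace_one_eq_zero : (1 : B) = 0 := by
  have h := brace_mul_zero hB 1
  rw [one_mul] at h
  exact h.symm

lemma brace_mul_neg (a u : B) : a * (-u) = a + a - a * u := by
  have h := brace_mul_add hB a u (-u)
  rw [add_neg_cancel, brace_mul_zero hB] at h
  have h2 : a * u + a * (-u) = a + a := sub_eq_iff_eq_add.mp h.symm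
  rw [eq_sub_iff_add_eq, add_comm]
  exact h2

lemma brace_lambda_star (a b c : B) :
    a * (b * c - b - c) - a = (a * b * c - a * b - c) - (a * c - a - c) := by
  have e1 : b * c - b - c = b * c + -b + -c := by abel
  rw [e1, brace_mul_add hB, brace_mul_add hB, brace_mul_neg hB, brace_mul_neg hB,
    ← mul_assoc]
  abel

omit hB in
lemma brace_conj (a z : B) :
    a * z * a⁻¹ = (a * z - a) - ((a * z * a⁻¹) * a - (a * z * a⁻¹) - a) := by
  have h : (a * z * a⁻¹) * a = a * z := by group
  rw [h]; abel

lemma brace_inv_eq (x : B) : x⁻¹ * (-x) - x⁻¹ = x⁻¹ := by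
  rw [brace_mul_neg hB, inv_mul_cancel, brace_one_eq_zero hB]
  abel

lemma lambda_starSpan {A : Set B} (hmul : ∀ x ∈ A, ∀ y ∈ A, x * y ∈ A)
    {a : B} (ha : a ∈ A) {z : B} (hz : z ∈ starSpan B A A) :
    a * z - a ∈ starSpan B A A := by
  let T : AddSubgroup B :=
    { carrier := {w | a * w - a ∈ starSpan B A A}
      zero_mem' := by
        simpa [brace_mul_zero hB] using (starSpan B A A).zero_mem
      add_mem' := by
        intro u v hu hv
        simp only [Set.mem_setOf_eq] at *
        have e : a * (u + v) - a = (a * u - a) + (a * v - a) := by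
          rw [brace_mul_add hB]; abel
        rw [e]; exact add_mem hu hv
      neg_mem' := by
        intro u hu
        simp only [Set.mem_setOf_eq] at *
        have e : a * (-u) - a = -(a * u - a) := by
          rw [brace_mul_neg hB]; abel
        rw [e]; exact neg_mem hu }
  have hle : starSpan B A A ≤ T := by
    apply (AddSubgroup.closure_le _).mpr
    rintro w ⟨b, hb, c, hc, rfl⟩
    show a * (b * c - b - c) - a ∈ starSpan B A A
    rw [brace_lambda_star hB]
    exact sub_mem (star_mem_starSpan (hmul a ha b hb) hc) (star_mem_starSpan ha hc)
  exact hle hz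

end BraceAux

/-- `Dch B k` is `d_k(B)` with `d_0(B) := B`. -/
def Dch (B : Type*) [AddCommGroup B] [Group B] : ℕ → AddSubgroup B
  | 0 => ⊤
  | k + 1 => starSpan B (Dch B k) (Dch B k)

section DchAux

variable {B : Type*} [AddCommGroup B] [Group B]

lemma dSeries_eq_Dch (k : ℕ) : dSeries B k = Dch B (k + 1) := by
  induction k with
  | zero =>
    show starSpan B Set.univ Set.univ
        = starSpan B ((⊤ : AddSubgroup B) : Set B) ((⊤ : AddSubgroup B) : Set B)
    rw [AddSubgroup.coe_top]
  | succ k ih =>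
    show starSpan B (dSeries B k) (dSeries B k)
        = starSpan B (Dch B (k + 1)) (Dch B (k + 1))
    rw [ih]

lemma Dch_antitone_step (k : ℕ) : Dch B (k + 1) ≤ Dch B k := by
  induction k with
  | zero => exact le_top
  | succ k ih =>
    show starSpan B (Dch B (k + 1)) (Dch B (k + 1))
        ≤ starSpan B (Dch B k) (Dch B k)
    exact starSpan_mono (fun x hx => ih hx) (fun x hx => ih hx)

variable (hB : ∀ a b c : B, a * (b + c) + a = a * b + a * c)
include hB

lemma Dch_struct (k : ℕ) :
    (∀ x ∈ Dch B k, ∀ y ∈ Dch B k, x * y ∈ Dch B k) ∧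
    (∀ x ∈ Dch B k, x⁻¹ ∈ Dch B k) ∧
    (∀ a ∈ Dch B k, ∀ z ∈ Dch B (k + 1), a * z - a ∈ Dch B (k + 1)) := by
  induction k with
  | zero =>
    refine ⟨fun _ _ _ _ => AddSubgroup.mem_top _, fun _ _ => AddSubgroup.mem_top _, ?_⟩
    intro a _ z hz
    exact lambda_starSpan hB (fun x _ y _ => AddSubgroup.mem_top _)
      (AddSubgroup.mem_top a) hz
  | succ k ih =>
    obtain ⟨hmulk, hinvk, hlamk⟩ := ih
    have hsub : ∀ x ∈ Dch B (k + 1), x ∈ Dch B k := fun x hx => Dch_antitone_step k hx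
    have hmul : ∀ x ∈ Dch B (k + 1), ∀ y ∈ Dch B (k + 1), x * y ∈ Dch B (k + 1) := by
      intro x hx y hy
      have h1 : x * y - x - y ∈ Dch B (k + 1) :=
        star_mem_starSpan (hsub x hx) (hsub y hy)
      have e : x * y = (x * y - x - y) + x + y := by abel
      rw [e]
      exact add_mem (add_mem h1 hx) hy
    have hlam : ∀ a ∈ Dch B (k + 1), ∀ z ∈ Dch B (k + 2), a * z - a ∈ Dch B (k + 2) := by
      intro a ha z hz
      exact lambda_starSpan hB hmul ha hz
    have hinv : ∀ x ∈ Dch B (k + 1), x⁻¹ ∈ Dch B (k + 1) := by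
      intro x hx
      have hxi : x⁻¹ ∈ Dch B k := hinvk x (hsub x hx)
      have h := hlamk x⁻¹ hxi (-x) (neg_mem hx)
      rwa [brace_inv_eq hB] at h
    exact ⟨hmul, hinv, hlam⟩

lemma Dch_conj (k : ℕ) {a z : B} (ha : a ∈ Dch B k) (hz : z ∈ Dch B (k + 1)) :
    a * z * a⁻¹ ∈ Dch B (k + 1) := by
  obtain ⟨hmul, hinv, hlam⟩ := Dch_struct hB k
  have hg : a * z * a⁻¹ ∈ Dch B k :=
    hmul _ (hmul a ha z (Dch_antitone_step k hz)) _ (hinv a ha)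
  have h1 : a * z - a ∈ Dch B (k + 1) := hlam a ha z hz
  have h2 : (a * z * a⁻¹) * a - (a * z * a⁻¹) - a ∈ Dch B (k + 1) :=
    star_mem_starSpan hg ha
  have h3 := sub_mem h1 h2
  rwa [← brace_conj a z] at h3

lemma Dch_solvable {n : ℕ} (hn : Dch B n = ⊥) : IsSolvableIn (Set.univ : Set B) := by
  refine ⟨n, fun i => (Dch B (n - i) : Set B), ?_, ?_, ?_, ?_⟩
  · show (Dch B (n - 0) : Set B) = {0}
    rw [Nat.sub_zero, hn]
    exact AddSubgroup.coe_bot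
  · show (Dch B (n - n) : Set B) = Set.univ
    rw [Nat.sub_self]
    exact AddSubgroup.coe_top
  · intro i _
    show IsSubBrace (Dch B (n - i) : Set B)
    obtain ⟨hmul, hinv, _⟩ := Dch_struct hB (n - i)
    exact ⟨zero_mem _, fun x hx y hy => add_mem hx hy, fun x hx => neg_mem hx, hmul, hinv⟩
  · intro i hi
    have hidx : n - i = (n - (i + 1)) + 1 := by omega
    show (Dch B (n - i) : Set B) ⊆ (Dch B (n - (i+1)) : Set B) ∧
      (∀ x ∈ (Dch B (n - (i+1)) : Set B), ∀ y ∈ (Dch B (n - i) : Set B), x * y * x⁻¹ ∈ (Dch B (n - i) : Set B)) ∧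
      (∀ x ∈ (Dch B (n - (i+1)) : Set B), ∀ y ∈ (Dch B (n - i) : Set B), x * y - x ∈ (Dch B (n - i) : Set B)) ∧
      (∀ x ∈ (Dch B (n - (i+1)) : Set B), ∀ y ∈ (Dch B (n - (i+1)) : Set B), x * y - x - y ∈ (Dch B (n - i) : Set B))
    rw [hidx]
    refine ⟨fun x hx => Dch_antitone_step _ hx, ?_, ?_, ?_⟩
    · intro x hx y hy
      exact Dch_conj hB _ hx hy
    · intro x hx y hy
      exact (Dch_struct hB _).2.2 x hx y hy
    · intro x hx y hy
      exact star_mem_starSpan hx hy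

omit hB in
lemma dSeries_le_leftSeries (k : ℕ) : dSeries B k ≤ leftSeries B (k + 1) := by
  induction k with
  | zero =>
    show starSpan B Set.univ Set.univ
        ≤ starSpan B Set.univ ((⊤ : AddSubgroup B) : Set B)
    exact starSpan_mono (fun x hx => hx) (fun x _ => AddSubgroup.mem_top _)
  | succ k ih =>
    show starSpan B (dSeries B k) (dSeries B k)
        ≤ starSpan B Set.univ (leftSeries B (k + 1))
    exact starSpan_mono (fun x _ => Set.mem_univ x) (fun x hx => ih hx)

omit hB in
lemma dSeries_le_rightSeries (k : ℕ) : dSeries B k ≤ rightSeries B (k + 1) := by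
  induction k with
  | zero =>
    show starSpan B Set.univ Set.univ
        ≤ starSpan B ((⊤ : AddSubgroup B) : Set B) Set.univ
    exact starSpan_mono (fun x _ => AddSubgroup.mem_top _) (fun x hx => hx)
  | succ k ih =>
    show starSpan B (dSeries B k) (dSeries B k)
        ≤ starSpan B (rightSeries B (k + 1)) Set.univ
    exact starSpan_mono (fun x hx => ih hx) (fun x _ => Set.mem_univ x)

omit hB in
lemma Dch_le_leftSeries (k : ℕ) : Dch B k ≤ leftSeries B k := by
  cases k with
  | zero => exact le_top
  | succ k => rw [← dSeries_eq_Dch]; exact dSeries_le_leftSeries k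

omit hB in
lemma Dch_le_rightSeries (k : ℕ) : Dch B k ≤ rightSeries B k := by
  cases k with
  | zero => exact le_top
  | succ k => rw [← dSeries_eq_Dch]; exact dSeries_le_rightSeries k

end DchAux

/-- for every positive integer `n`, `d_n(B) ⊆ B^{n+1}` and
`d_n(B) ⊆ B^{(n+1)}`; consequently every left nilpotent left brace is solvable and
every right nilpotent left brace is solvable. -/
theorem dSeries_le_and_nilpotent_solvable (B : Type*) [AddCommGroup B] [Group B]
    (hB : ∀ a b c : B, a * (b + c) + a = a * b + a * c) :
    (∀ k : ℕ, dSeries B k ≤ leftSeries B (k + 1) ∧ dSeries B k ≤ rightSeries B (k + 1)) ∧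
    ((∃ n : ℕ, leftSeries B n = ⊥) → IsSolvableIn (Set.univ : Set B)) ∧
    ((∃ n : ℕ, rightSeries B n = ⊥) → IsSolvableIn (Set.univ : Set B)) := by
  refine ⟨fun k => ⟨dSeries_le_leftSeries k, dSeries_le_rightSeries k⟩, ?_, ?_⟩
  · rintro ⟨n, hn⟩
    refine Dch_solvable hB (n := n) ?_
    exact le_bot_iff.mp (hn ▸ Dch_le_leftSeries n)
  · rintro ⟨n, hn⟩
    refine Dch_solvable hB (n := n) ?_
    exact le_bot_iff.mp (hn ▸ Dch_le_rightSeries n)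
end

section
/- With notation as in the context, the left brace B = T ⋊∘ Z/(p) is simple if and only if im(c_i − id) + im(f_i − id) = (Z/(p))^{n_i} for every i = 1,…,s. In particular, B is simple whenever c_i − id is invertible for every i. -/
/-
An ideal `N` is closed under the addition of `B`, because `x + y = x · λ_{x⁻¹}(y)`.

Every nonzero ideal contains `ζ = ((0, 0), 1)`. If `x ∈ N` has a nonzero vector part, then by
non-degeneracy of the `b_i` some `λ_{((z, 0), 0)}(x) - x` is a nonzero central element, and the
central elements of `N` form a nonzero subgroup of `Z/(p)`. If `x = ((0, a), μ)` with `a ≠ 0`, some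
conjugate of `x` by a vector has a nonzero vector part, since `c^a f^μ = id` on a factor would give
`c^(a p) = id` with `p` prime to `l_i`.

From `ζ ∈ N`, conjugations give every `((0, β), t)` (this is where `γ_i - 1` must be a unit) and,
up to a central element, every vector `w - f w` and `w - c w`; so `N = B` as soon as
`im(c_i - id) + im(f_i - id)` is everything.

Conversely, every automorphism in the group generated by `c_i` and `f_i` moves points only within
`V_i = im(c_i - id) + im(f_i - id)`, so the elements with vector part in `∏ V_i` form an ideal;
it contains `ζ`, so simplicity forces `V_i = (Z/(p))^{n_i}`.
-/

/-- `(Z/(p))^n`. -/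
abbrev BraceVec (p n : ℕ) := Fin n → ZMod p

/-- The underlying set of the semidirect product `T = (Z/(p))^n ⋊ A`, where
`n = n₁ + ⋯ + n_s`, `(Z/(p))^n = ∏ i, (Z/(p))^{n_i}` and `A = ∏ i, Z/(l i)`;
its addition is the componentwise one. -/
abbrev BraceT (p s : ℕ) (l nn : Fin s → ℕ) : Type :=
  ((i : Fin s) → BraceVec p (nn i)) × ((i : Fin s) → ZMod (l i))

/-- Multiplication of `T = (Z/(p))^n ⋊ A` via `β_{(a₁,…,a_s)} = (c₁^{a₁},…,c_s^{a_s})`. -/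
def braceTmul {p s : ℕ} {l nn : Fin s → ℕ}
    (c : ∀ i : Fin s, AddAut (BraceVec p (nn i)))
    (x y : BraceT p s l nn) : BraceT p s l nn :=
  (fun i => x.1 i + ((x.2 i).val • c i) (y.1 i), x.2 + y.2)

/-- `α_μ(u₁,…,u_s,a₁,…,a_s) = (f₁^μ(u₁),…,f_s^μ(u_s), γ₁^μ·a₁,…, γ_s^μ·a_s)`. -/
def braceAlpha {p s : ℕ} {l nn : Fin s → ℕ}
    (f : ∀ i : Fin s, AddAut (BraceVec p (nn i)))
    (γ : ∀ i : Fin s, (ZMod (l i))ˣ)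
    (μ : ZMod p) (x : BraceT p s l nn) : BraceT p s l nn :=
  (fun i => (μ.val • f i) (x.1 i), fun i => ((γ i : ZMod (l i)) ^ μ.val) * x.2 i)

/-- The underlying set of the asymmetric product `B = T ⋊∘ Z/(p)`. -/
abbrev BraceB (p s : ℕ) (l nn : Fin s → ℕ) : Type := BraceT p s l nn × ZMod p

/-- The symmetric bilinear form `b((u,a),(v,a')) = Σ_{i} b_i(u_i,v_i)` on `T`. -/
def braceBil {p s : ℕ} {l nn : Fin s → ℕ}
    (bi : ∀ i : Fin s, BraceVec p (nn i) → BraceVec p (nn i) → ZMod p)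
    (x y : BraceT p s l nn) : ZMod p :=
  ∑ i : Fin s, bi i (x.1 i) (y.1 i)

/-- Addition of the asymmetric product `B = T ⋊∘ Z/(p)`. -/
def braceBadd {p s : ℕ} {l nn : Fin s → ℕ}
    (bi : ∀ i : Fin s, BraceVec p (nn i) → BraceVec p (nn i) → ZMod p)
    (x y : BraceB p s l nn) : BraceB p s l nn :=
  (x.1 + y.1, x.2 + y.2 + braceBil bi x.1 y.1)

/-- Additive inverse in the asymmetric product `B = T ⋊∘ Z/(p)`. -/
def braceBneg {p s : ℕ} {l nn : Fin s → ℕ}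
    (bi : ∀ i : Fin s, BraceVec p (nn i) → BraceVec p (nn i) → ZMod p)
    (x : BraceB p s l nn) : BraceB p s l nn :=
  (-x.1, -x.2 - braceBil bi x.1 (-x.1))

/-- Multiplication of the asymmetric product `B = T ⋊∘ Z/(p)`. -/
def braceBmul {p s : ℕ} {l nn : Fin s → ℕ}
    (c f : ∀ i : Fin s, AddAut (BraceVec p (nn i)))
    (γ : ∀ i : Fin s, (ZMod (l i))ˣ)
    (x y : BraceB p s l nn) : BraceB p s l nn :=
  (braceTmul c x.1 (braceAlpha f γ x.2 y.1), x.2 + y.2)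

/-- An ideal of the left brace `B = T ⋊∘ Z/(p)`: a normal subgroup of `(B,·)` closed
under all the lambda maps `λ_a(x) = a·x − a`.  (Closure under multiplicative inverses
and conjugation is phrased via the defining equation of the inverse.) -/
def IsIdealBraceB {p s : ℕ} {l nn : Fin s → ℕ}
    (bi : ∀ i : Fin s, BraceVec p (nn i) → BraceVec p (nn i) → ZMod p)
    (c f : ∀ i : Fin s, AddAut (BraceVec p (nn i)))
    (γ : ∀ i : Fin s, (ZMod (l i))ˣ)
    (N : Set (BraceB p s l nn)) : Prop :=
  ((0 : BraceT p s l nn), (0 : ZMod p)) ∈ N ∧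
  (∀ x ∈ N, ∀ y ∈ N, braceBmul c f γ x y ∈ N) ∧
  (∀ x ∈ N, ∀ y : BraceB p s l nn,
      braceBmul c f γ x y = ((0 : BraceT p s l nn), (0 : ZMod p)) → y ∈ N) ∧
  (∀ g : BraceB p s l nn, ∀ x ∈ N, ∀ g' : BraceB p s l nn,
      braceBmul c f γ g g' = ((0 : BraceT p s l nn), (0 : ZMod p)) →
      braceBmul c f γ (braceBmul c f γ g x) g' ∈ N) ∧
  (∀ a : BraceB p s l nn, ∀ x ∈ N,
      braceBadd bi (braceBmul c f γ a x) (braceBneg bi a) ∈ N)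

@[to_additive]
theorem pow_val_add_of_orderOf_eq {M : Type*} [Monoid M] {x : M} {n : ℕ} [NeZero n]
    (h : orderOf x = n) (a b : ZMod n) : x ^ (a + b).val = x ^ a.val * x ^ b.val := by
  subst h
  rw [ZMod.val_add, pow_mod_orderOf, pow_add]

theorem nsmul_val_neg_of_addOrderOf_eq {G : Type*} [AddGroup G] {x : G} {n : ℕ} [NeZero n]
    (h : addOrderOf x = n) (a : ZMod n) : (-a).val • x = -(a.val • x) :=
  eq_neg_of_add_eq_zero_left <| by
    rw [← nsmul_val_add_of_addOrderOf_eq h, neg_add_cancel, ZMod.val_zero, zero_nsmul]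

theorem nsmul_eq_nsmul_of_natCast_eq {G : Type*} [AddMonoid G] {x : G} {n j k : ℕ}
    (h : addOrderOf x = n) (hjk : (j : ZMod n) = k) : j • x = k • x := by
  subst h
  rw [← mod_addOrderOf_nsmul, (ZMod.natCast_eq_natCast_iff' _ _ _).1 hjk, mod_addOrderOf_nsmul]

theorem nsmul_add_nsmul_of_add_eq {G : Type*} [AddMonoid G] {x y : G} {r : ℕ}
    (h : x + y = r • y + x) (m k : ℕ) : m • x + k • y = (r ^ m * k) • y + m • x := by
  induction m generalizing k with
  | zero => simp
  | succ m ih =>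
    have hx : x + (r ^ m * k) • y = (r ^ (m + 1) * k) • y + x := by
      rw [(AddSemiconjBy.nsmul_right h _).eq, ← mul_nsmul, pow_succ]; ring_nf
    rw [succ_nsmul', add_assoc, ih, ← add_assoc, hx, add_assoc]

theorem nsmul_val_add_nsmul_val_of_add_eq {G : Type*} [AddMonoid G] {x y : G} {n : ℕ} [NeZero n]
    {g : ZMod n} (hy : addOrderOf y = n) (h : x + y = g.val • y + x) (m : ℕ) (a : ZMod n) :
    m • x + a.val • y = (g ^ m * a).val • y + m • x := by
  rw [nsmul_add_nsmul_of_add_eq h, nsmul_eq_nsmul_of_natCast_eq hy]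
  push_cast [ZMod.natCast_zmod_val]
  rfl

theorem ZMod.eq_zero_of_val_nsmul_eq_zero {G : Type*} [AddMonoid G] {x : G} {n : ℕ} [NeZero n]
    (h : addOrderOf x = n) {a : ZMod n} (ha : a.val • x = 0) : a = 0 := by
  subst h
  rw [← ZMod.natCast_zmod_val a, ZMod.natCast_eq_zero_iff]
  exact addOrderOf_dvd_of_nsmul_eq_zero ha

theorem Nat.Prime.not_dvd_of_forall_dvd_sub_one {p L : ℕ} (hp : p.Prime)
    (h : ∀ q, q.Prime → q ∣ L → p ∣ q - 1) : ¬ p ∣ L := fun hpL =>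
  Nat.not_dvd_of_pos_of_lt (Nat.sub_pos_of_lt hp.one_lt) (Nat.sub_lt hp.pos one_pos) (h p hp hpL)

theorem eq_zero_of_add_eq_zero_of_coprime {G : Type*} [AddGroup G] {x y : G} {m n : ℕ}
    (h : x + y = 0) (hx : m • x = 0) (hy : n • y = 0) (hmn : m.Coprime n) : x = 0 := by
  have hnx : n • x = 0 := by rw [eq_neg_of_add_eq_zero_left h, neg_nsmul, hy, neg_zero]
  rw [← AddMonoid.addOrderOf_eq_one_iff, ← Nat.dvd_one, ← hmn.gcd_eq_one]
  exact Nat.dvd_gcd (addOrderOf_dvd_of_nsmul_eq_zero hx) (addOrderOf_dvd_of_nsmul_eq_zero hnx)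

namespace AddSubgroup

variable {E : Type*} [AddGroup E]

def autFixingCosets (V : AddSubgroup E) : AddSubgroup (AddAut E) where
  carrier := {h | ∀ x, h x - x ∈ V}
  zero_mem' x := by simp
  add_mem' {h₁ h₂} h₁V h₂V x := by
    rw [AddAut.add_apply, ← sub_add_sub_cancel]
    exact V.add_mem (h₁V _) (h₂V x)
  neg_mem' {h} hV x := by
    simpa only [AddAut.apply_neg_self, neg_sub] using V.neg_mem (hV ((-h) x))

theorem apply_mem_of_mem_autFixingCosets {V : AddSubgroup E} {h : AddAut E}
    (hh : h ∈ V.autFixingCosets) {y : E} (hy : y ∈ V) : h y ∈ V := by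
  simpa using V.add_mem (hh y) hy

end AddSubgroup

def AddAut.imSubOne {E : Type*} [AddCommGroup E] (h : AddAut E) : AddSubgroup E :=
  (h.toAddMonoidHom - AddMonoidHom.id E).range

theorem AddAut.sub_mem_imSubOne {E : Type*} [AddCommGroup E] (h : AddAut E) (x : E) :
    h x - x ∈ h.imSubOne :=
  ⟨x, rfl⟩

def AddAut.isometries {E R : Type*} [Add E] (b : E → E → R) : AddSubgroup (AddAut E) where
  carrier := {h | ∀ u v, b (h u) (h v) = b u v}
  zero_mem' _ _ := rfl
  add_mem' {h₁ h₂} h₁b h₂b u v := by rw [AddAut.add_apply, AddAut.add_apply, h₁b, h₂b]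
  neg_mem' {h} hb u v := by rw [← hb, AddAut.apply_neg_self, AddAut.apply_neg_self]

namespace BraceB

variable {p s : ℕ} {l nn : Fin s → ℕ}
  (c f : ∀ i : Fin s, AddAut (BraceVec p (nn i)))
  (γ : ∀ i : Fin s, (ZMod (l i))ˣ)
  (bi : ∀ i : Fin s, BraceVec p (nn i) → BraceVec p (nn i) → ZMod p)

theorem ext {x y : BraceB p s l nn} (h₁ : ∀ i, x.1.1 i = y.1.1 i) (h₂ : ∀ i, x.1.2 i = y.1.2 i)
    (h₃ : x.2 = y.2) : x = y :=
  Prod.ext (Prod.ext (funext h₁) (funext h₂)) h₃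

abbrev zeta : BraceB p s l nn :=
  ((0 : BraceT p s l nn), 1)

/-- The hypotheses under which `B` is a left brace. -/
structure Admissible : Prop where
  prime : p.Prime
  one_lt : ∀ i, 1 < l i
  addOrderOf_f : ∀ i, addOrderOf (f i) = p
  addOrderOf_c : ∀ i, addOrderOf (c i) = l i
  orderOf_γ : ∀ i, orderOf (γ i) = p
  f_add_c : ∀ i, f i + c i = ((γ i : ZMod (l i)).val) • c i + f i
  symm : ∀ i, ∀ u v : BraceVec p (nn i), bi i u v = bi i v u
  add_left : ∀ i, ∀ u u' v : BraceVec p (nn i), bi i (u + u') v = bi i u v + bi i u' v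
  c_isometry : ∀ i, ∀ u v : BraceVec p (nn i), bi i (c i u) (c i v) = bi i u v
  f_isometry : ∀ i, ∀ u v : BraceVec p (nn i), bi i (f i u) (f i v) = bi i u v

/-- For `x = ((u, a), μ)` (vector part `u = x.1.1`, `A`-part `a = x.1.2`), the automorphism
`c_i^{a_i} ∘ f_i^μ` by which `x` acts on vector parts: in `AddAut`, `+` is composition. -/
def act (x : BraceB p s l nn) (i : Fin s) : AddAut (BraceVec p (nn i)) :=
  (x.1.2 i).val • c i + x.2.val • f i

theorem act_mem_closure (x : BraceB p s l nn) (i : Fin s) :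
    act c f x i ∈ AddSubgroup.closure {c i, f i} :=
  add_mem (nsmul_mem (AddSubgroup.subset_closure (by simp)) _)
    (nsmul_mem (AddSubgroup.subset_closure (by simp)) _)

@[simp]
theorem act_mk_zero_zero (w : ∀ i, BraceVec p (nn i)) (i : Fin s) :
    act c f (((w, 0), 0) : BraceB p s l nn) i = 0 := by
  simp [act]

theorem braceBmul_eq (x y : BraceB p s l nn) :
    braceBmul c f γ x y = ((fun i => x.1.1 i + act c f x i (y.1.1 i),
      fun i => x.1.2 i + (γ i : ZMod (l i)) ^ x.2.val * y.1.2 i), x.2 + y.2) :=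
  rfl

def inv (x : BraceB p s l nn) : BraceB p s l nn :=
  ((fun i => (-act c f x i) (-x.1.1 i), fun i => -((γ i : ZMod (l i)) ^ (-x.2).val * x.1.2 i)),
    -x.2)

def lambda (g x : BraceB p s l nn) : BraceB p s l nn :=
  braceBadd bi (braceBmul c f γ g x) (braceBneg bi g)

theorem lambda_fst (g x : BraceB p s l nn) :
    (lambda c f γ bi g x).1 =
      (fun i => act c f g i (x.1.1 i), fun i => (γ i : ZMod (l i)) ^ g.2.val * x.1.2 i) :=
  Prod.ext (funext fun _ => add_neg_cancel_comm _ _) (funext fun _ => add_neg_cancel_comm _ _)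

variable {c f γ bi}

theorem vec_eq_of_braceBmul_eq_zero {x y : BraceB p s l nn}
    (hxy : braceBmul c f γ x y = ((0 : BraceT p s l nn), (0 : ZMod p))) (i : Fin s) :
    y.1.1 i = (-act c f x i) (-x.1.1 i) := by
  have h : x.1.1 i + act c f x i (y.1.1 i) = 0 := congrFun (congrArg (·.1.1) hxy) i
  rw [neg_eq_of_add_eq_zero_right h, AddAut.neg_apply_self]

namespace Admissible

theorem neZero_p (H : Admissible c f γ bi) : NeZero p :=
  ⟨H.prime.ne_zero⟩

theorem neZero_l (H : Admissible c f γ bi) (i : Fin s) : NeZero (l i) :=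
  ⟨(zero_lt_one.trans (H.one_lt i)).ne'⟩

def biLeft (H : Admissible c f γ bi) (i : Fin s) (v : BraceVec p (nn i)) :
    BraceVec p (nn i) →+ ZMod p :=
  AddMonoidHom.mk' (bi i · v) (H.add_left i · · v)

theorem bi_neg_right (H : Admissible c f γ bi) (i : Fin s) (u v : BraceVec p (nn i)) :
    bi i u (-v) = -bi i u v := by
  rw [H.symm, H.symm i u]
  exact (H.biLeft i u).map_neg v

theorem closure_le_isometries (H : Admissible c f γ bi) (i : Fin s) :
    AddSubgroup.closure {c i, f i} ≤ AddAut.isometries (bi i) :=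
  (AddSubgroup.closure_le _).2 (Set.insert_subset_iff.2 ⟨H.c_isometry i,
    Set.singleton_subset_iff.2 (H.f_isometry i)⟩)

theorem braceBil_sub_left (H : Admissible c f γ bi) (x y z : BraceT p s l nn) :
    braceBil bi (x - y) z = braceBil bi x z - braceBil bi y z := by
  simp only [braceBil, ← Finset.sum_sub_distrib]
  exact Finset.sum_congr rfl fun i _ => (H.biLeft i (z.1 i)).map_sub (x.1 i) (y.1 i)

theorem braceBil_neg_right (H : Admissible c f γ bi) (x y : BraceT p s l nn) :
    braceBil bi x (-y) = -braceBil bi x y := by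
  simp only [braceBil, ← Finset.sum_neg_distrib]
  exact Finset.sum_congr rfl fun i _ => H.bi_neg_right i _ _

theorem braceBil_eq_zero_of_left (H : Admissible c f γ bi) {x : BraceT p s l nn} (hx : x.1 = 0)
    (y : BraceT p s l nn) : braceBil bi x y = 0 :=
  Finset.sum_eq_zero fun i _ => by rw [hx]; exact (H.biLeft i (y.1 i)).map_zero

theorem braceBil_eq_zero_of_right (H : Admissible c f γ bi) (x : BraceT p s l nn)
    {y : BraceT p s l nn} (hy : y.1 = 0) : braceBil bi x y = 0 := by
  rw [braceBil, Finset.sum_congr rfl fun i _ => H.symm i _ _]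
  exact H.braceBil_eq_zero_of_left hy x

theorem braceBadd_braceBneg (H : Admissible c f γ bi) (x y : BraceB p s l nn) :
    braceBadd bi y (braceBneg bi x) = (y.1 - x.1, y.2 - x.2 - braceBil bi (y.1 - x.1) x.1) :=
  Prod.ext (sub_eq_add_neg _ _).symm <| by
    simp only [braceBadd, braceBneg, H.braceBil_sub_left, H.braceBil_neg_right]
    ring

theorem braceBadd_of_left (H : Admissible c f γ bi) {x : BraceB p s l nn} (hx : x.1.1 = 0)
    (y : BraceB p s l nn) : braceBadd bi x y = (x.1 + y.1, x.2 + y.2) := by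
  rw [braceBadd, H.braceBil_eq_zero_of_left hx, add_zero]

theorem braceBadd_of_right (H : Admissible c f γ bi) (x : BraceB p s l nn)
    {y : BraceB p s l nn} (hy : y.1.1 = 0) : braceBadd bi x y = (x.1 + y.1, x.2 + y.2) := by
  rw [braceBadd, H.braceBil_eq_zero_of_right _ hy, add_zero]

theorem γ_pow_mul_pow_neg (H : Admissible c f γ bi) (i : Fin s) (μ : ZMod p) :
    (γ i : ZMod (l i)) ^ μ.val * (γ i : ZMod (l i)) ^ (-μ).val = 1 := by
  have := H.neZero_p
  rw [← pow_val_add_of_orderOf_eq (orderOf_units.trans (H.orderOf_γ i)), add_neg_cancel,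
    ZMod.val_zero, pow_zero]

theorem braceBmul_inv (H : Admissible c f γ bi) (x : BraceB p s l nn) :
    braceBmul c f γ x (inv c f γ x) = ((0 : BraceT p s l nn), (0 : ZMod p)) := by
  refine ext (fun i => ?_) (fun i => ?_) (add_neg_cancel _)
  · simp [braceBmul_eq, inv]
  · simp [braceBmul_eq, inv, ← mul_assoc, H.γ_pow_mul_pow_neg]

theorem act_inv (H : Admissible c f γ bi) (x : BraceB p s l nn) (i : Fin s) :
    act c f (inv c f γ x) i = -act c f x i := by
  have := H.neZero_p
  have := H.neZero_l i
  rw [act, act, neg_add_rev, ← nsmul_val_neg_of_addOrderOf_eq (H.addOrderOf_f i),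
    ← nsmul_val_neg_of_addOrderOf_eq (H.addOrderOf_c i),
    nsmul_val_add_nsmul_val_of_add_eq (H.addOrderOf_c i) (H.f_add_c i), inv, mul_neg]

theorem lambda_snd (H : Admissible c f γ bi) (g x : BraceB p s l nn) :
    (lambda c f γ bi g x).2 = x.2 - braceBil bi (lambda c f γ bi g x).1 g.1 := by
  rw [lambda, H.braceBadd_braceBneg]
  simp only [braceBmul_eq, add_sub_cancel_left]

theorem braceBmul_lambda_inv (H : Admissible c f γ bi) (x y : BraceB p s l nn) :
    braceBmul c f γ x (lambda c f γ bi (inv c f γ x) y) = braceBadd bi x y := by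
  refine ext (fun i => ?_) (fun i => ?_) ?_
  · simp [braceBmul_eq, lambda_fst, H.act_inv, braceBadd]
  · simp [braceBmul_eq, lambda_fst, inv, ← mul_assoc, H.γ_pow_mul_pow_neg, braceBadd]
  · have hbil : braceBil bi (lambda c f γ bi (inv c f γ x) y).1 (inv c f γ x).1
        = -braceBil bi x.1 y.1 := by
      rw [← H.braceBil_neg_right]
      refine Finset.sum_congr rfl fun i _ => ?_
      have hiso := H.closure_le_isometries i (neg_mem (act_mem_closure c f x i))
      simp only [lambda_fst, H.act_inv]
      rw [show (inv c f γ x).1.1 i = (-act c f x i) (-x.1.1 i) from rfl, hiso, H.bi_neg_right,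
        H.symm, ← H.bi_neg_right]
      rfl
    simp only [braceBmul_eq, H.lambda_snd, hbil, braceBadd]
    ring

theorem fst_snd_eq_zero_of_act_eq_zero (H : Admissible c f γ bi)
    (hdiv : ∀ q : ℕ, q.Prime → q ∣ ∏ i, l i → p ∣ q - 1) {x : BraceB p s l nn} {j : Fin s}
    (hx : act c f x j = 0) : x.1.2 j = 0 := by
  have := H.neZero_l j
  have hcop : (l j).Coprime p := ((Nat.Prime.coprime_iff_not_dvd H.prime).2 fun hdvd =>
    H.prime.not_dvd_of_forall_dvd_sub_one hdiv
      (hdvd.trans (Finset.dvd_prod_of_mem l (Finset.mem_univ j)))).symm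
  have hc : l j • c j = 0 := by simpa only [H.addOrderOf_c j] using addOrderOf_nsmul_eq_zero (c j)
  have hf : p • f j = 0 := by simpa only [H.addOrderOf_f j] using addOrderOf_nsmul_eq_zero (f j)
  refine ZMod.eq_zero_of_val_nsmul_eq_zero (H.addOrderOf_c j)
    (eq_zero_of_add_eq_zero_of_coprime hx ?_ ?_ hcop)
  · rw [nsmul_left_comm, hc, nsmul_zero]
  · rw [nsmul_left_comm, hf, nsmul_zero]

end Admissible

end BraceB

namespace IsIdealBraceB

open BraceB

variable {p s : ℕ} {l nn : Fin s → ℕ}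
  {c f : ∀ i : Fin s, AddAut (BraceVec p (nn i))}
  {γ : ∀ i : Fin s, (ZMod (l i))ˣ}
  {bi : ∀ i : Fin s, BraceVec p (nn i) → BraceVec p (nn i) → ZMod p}
  {N : Set (BraceB p s l nn)} {x : BraceB p s l nn}

theorem zero_mem (hN : IsIdealBraceB bi c f γ N) :
    ((0 : BraceT p s l nn), (0 : ZMod p)) ∈ N :=
  hN.1

theorem braceBmul_mem (hN : IsIdealBraceB bi c f γ N) {x y : BraceB p s l nn} (hx : x ∈ N)
    (hy : y ∈ N) : braceBmul c f γ x y ∈ N :=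
  hN.2.1 x hx y hy

theorem mem_of_braceBmul_eq_zero (hN : IsIdealBraceB bi c f γ N) {y : BraceB p s l nn}
    (hx : x ∈ N) (hxy : braceBmul c f γ x y = ((0 : BraceT p s l nn), (0 : ZMod p))) : y ∈ N :=
  hN.2.2.1 x hx y hxy

theorem conj_mem (hN : IsIdealBraceB bi c f γ N) (g : BraceB p s l nn) (hx : x ∈ N)
    {g' : BraceB p s l nn} (hg : braceBmul c f γ g g' = ((0 : BraceT p s l nn), (0 : ZMod p))) :
    braceBmul c f γ (braceBmul c f γ g x) g' ∈ N :=
  hN.2.2.2.1 g x hx g' hg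

theorem lambda_mem (hN : IsIdealBraceB bi c f γ N) (g : BraceB p s l nn) (hx : x ∈ N) :
    lambda c f γ bi g x ∈ N :=
  hN.2.2.2.2 g x hx

theorem inv_mem (hN : IsIdealBraceB bi c f γ N) (H : Admissible c f γ bi) (hx : x ∈ N) :
    inv c f γ x ∈ N :=
  hN.mem_of_braceBmul_eq_zero hx (H.braceBmul_inv x)

theorem braceBneg_mem (hN : IsIdealBraceB bi c f γ N) (H : Admissible c f γ bi) (hx : x ∈ N) :
    braceBneg bi x ∈ N := by
  have h := hN.lambda_mem x (hN.inv_mem H hx)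
  rwa [lambda, H.braceBmul_inv, H.braceBadd_of_left rfl, zero_add, zero_add] at h

theorem braceBadd_mem (hN : IsIdealBraceB bi c f γ N) (H : Admissible c f γ bi)
    {y : BraceB p s l nn} (hx : x ∈ N) (hy : y ∈ N) : braceBadd bi x y ∈ N := by
  simpa only [H.braceBmul_lambda_inv] using hN.braceBmul_mem hx (hN.lambda_mem (inv c f γ x) hy)

theorem sub_mem (hN : IsIdealBraceB bi c f γ N) (H : Admissible c f γ bi)
    {y : BraceB p s l nn} (hy : y ∈ N) (hx : x ∈ N) :
    (y.1 - x.1, y.2 - x.2 - braceBil bi (y.1 - x.1) x.1) ∈ N := by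
  simpa only [H.braceBadd_braceBneg] using hN.braceBadd_mem H hy (hN.braceBneg_mem H hx)

theorem conj_vec_mem (hN : IsIdealBraceB bi c f γ N) (hx : x ∈ N) (w : ∀ i, BraceVec p (nn i)) :
    ((fun i => w i + x.1.1 i - act c f x i (w i), x.1.2), x.2) ∈ N := by
  have h := hN.conj_mem ((w, 0), 0) hx (g' := ((-w, 0), 0))
    (ext (fun i => by simp [braceBmul_eq]) (fun i => by simp [braceBmul_eq]) (add_zero 0))
  convert h using 1
  refine ext (fun i => ?_) (fun i => ?_) ?_ <;> simp [braceBmul_eq, act, sub_eq_add_neg]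

theorem center_mem (hN : IsIdealBraceB bi c f γ N) (H : Admissible c f γ bi) {t : ZMod p}
    (ht : ((0 : BraceT p s l nn), t) ∈ N) (ht0 : t ≠ 0) (t' : ZMod p) :
    ((0 : BraceT p s l nn), t') ∈ N := by
  have : Fact p.Prime := ⟨H.prime⟩
  let S : AddSubmonoid (ZMod p) :=
    { carrier := {t | ((0 : BraceT p s l nn), t) ∈ N}
      zero_mem' := hN.zero_mem
      add_mem' := fun {a b} ha hb => by
        simpa [H.braceBadd_of_left (x := ((0 : BraceT p s l nn), a)) rfl] using
          hN.braceBadd_mem H ha hb }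
  have h := S.nsmul_mem ht (t' * t⁻¹).val
  rwa [nsmul_eq_mul, ZMod.natCast_zmod_val, mul_assoc, inv_mul_cancel₀ ht0, mul_one] at h

theorem zeta_mem_of_vec_ne_zero (hN : IsIdealBraceB bi c f γ N) (H : Admissible c f γ bi)
    (hnd : ∀ i, ∀ u : BraceVec p (nn i), (∀ v, bi i u v = 0) → u = 0) (hx : x ∈ N) {j : Fin s}
    (hj : x.1.1 j ≠ 0) : zeta ∈ N := by
  obtain ⟨z, hz⟩ : ∃ z, bi j (x.1.1 j) z ≠ 0 := by
    by_contra! h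
    exact hj (hnd j _ h)
  have hfst : (lambda c f γ bi ((Pi.single j z, 0), 0) x).1 = x.1 := by
    simp [lambda_fst]
  have hsnd : (lambda c f γ bi ((Pi.single j z, 0), 0) x).2 = x.2 - bi j (x.1.1 j) z := by
    rw [H.lambda_snd, hfst, braceBil, Fintype.sum_eq_single j fun i hi => by
      dsimp only; rw [Pi.single_eq_of_ne hi, H.symm]; exact (H.biLeft i _).map_zero]
    simp
  have h := hN.sub_mem H (hN.lambda_mem ((Pi.single j z, 0), 0) hx) hx
  rw [hfst, hsnd, sub_self, H.braceBil_eq_zero_of_left rfl, sub_zero, sub_sub_cancel_left] at h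
  exact hN.center_mem H h (neg_ne_zero.2 hz) 1

theorem zeta_mem_of_vec_eq_zero (hN : IsIdealBraceB bi c f γ N) (H : Admissible c f γ bi)
    (hdiv : ∀ q : ℕ, q.Prime → q ∣ ∏ i, l i → p ∣ q - 1)
    (hnd : ∀ i, ∀ u : BraceVec p (nn i), (∀ v, bi i u v = 0) → u = 0) (hx : x ∈ N)
    (hu : x.1.1 = 0) {j : Fin s} (hj : x.1.2 j ≠ 0) :
    zeta ∈ N := by
  by_contra hζ
  refine hj (H.fst_snd_eq_zero_of_act_eq_zero hdiv (AddEquiv.ext fun z => ?_))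
  by_contra hz
  refine hζ (hN.zeta_mem_of_vec_ne_zero H hnd (hN.conj_vec_mem hx (Pi.single j z)) (j := j) ?_)
  simpa [hu, sub_eq_zero] using Ne.symm hz

theorem zeta_mem (hN : IsIdealBraceB bi c f γ N) (H : Admissible c f γ bi)
    (hdiv : ∀ q : ℕ, q.Prime → q ∣ ∏ i, l i → p ∣ q - 1)
    (hnd : ∀ i, ∀ u : BraceVec p (nn i), (∀ v, bi i u v = 0) → u = 0) (hx : x ∈ N)
    (hx0 : x ≠ ((0 : BraceT p s l nn), (0 : ZMod p))) :
    zeta ∈ N := by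
  obtain ⟨⟨u, a⟩, μ⟩ := x
  by_cases hu : ∃ j, u j ≠ 0
  · obtain ⟨j, hj⟩ := hu
    exact hN.zeta_mem_of_vec_ne_zero H hnd hx hj
  obtain rfl : u = 0 := funext (by simpa using hu)
  by_cases ha : ∃ j, a j ≠ 0
  · obtain ⟨j, hj⟩ := ha
    exact hN.zeta_mem_of_vec_eq_zero H hdiv hnd hx rfl hj
  obtain rfl : a = 0 := funext (by simpa using ha)
  exact hN.center_mem H hx (by rintro rfl; exact hx0 rfl) 1

theorem vec_zero_mem (hN : IsIdealBraceB bi c f γ N) (H : Admissible c f γ bi)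
    (hγ1 : ∀ i, IsUnit ((γ i : ZMod (l i)) - 1))
    (hζ : zeta ∈ N) (β : ∀ i, ZMod (l i)) (t : ZMod p) :
    (((0 : ∀ i, BraceVec p (nn i)), β), t) ∈ N := by
  have : Fact (1 < p) := ⟨H.prime.one_lt⟩
  -- conjugating `ζ` by `((0, α), 0)` gives `((0, α - γ α), 1)`; take `α = -(γ - 1)⁻¹ β`
  have hconj := hN.conj_mem ((0, fun i => -((hγ1 i).unit⁻¹ * β i)), 0) hζ
    (g' := ((0, fun i => (hγ1 i).unit⁻¹ * β i), 0))
    (ext (fun i => by simp [braceBmul_eq]) (fun i => by simp [braceBmul_eq]) (add_zero 0))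
  have h := hN.braceBadd_mem H hconj (hN.center_mem H hζ one_ne_zero (t - 1))
  convert h using 1
  rw [H.braceBadd_of_right _ (y := (0, t - 1)) rfl]
  refine ext (fun i => by simp [braceBmul_eq]) (fun i => ?_) (by simp [braceBmul_eq])
  simp only [braceBmul_eq, ZMod.val_one, ZMod.val_zero, pow_zero, pow_one, mul_zero, add_zero,
    zero_add, Prod.fst_zero, Prod.snd_zero, Pi.zero_apply]
  linear_combination (-β i) * (hγ1 i).mul_val_inv

def vecPart (hN : IsIdealBraceB bi c f γ N) (H : Admissible c f γ bi) :
    AddSubgroup (∀ i, BraceVec p (nn i)) where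
  carrier := {w | ∃ ν, ((w, 0), ν) ∈ N}
  zero_mem' := ⟨0, hN.zero_mem⟩
  add_mem' := by
    rintro _ _ ⟨_, ha⟩ ⟨_, hb⟩
    have h := hN.braceBadd_mem H ha hb
    rw [braceBadd, Prod.mk_add_mk, add_zero] at h
    exact ⟨_, h⟩
  neg_mem' := by
    rintro _ ⟨_, ha⟩
    have h := hN.braceBneg_mem H ha
    rw [braceBneg, Prod.neg_mk, neg_zero] at h
    exact ⟨_, h⟩

theorem mem_vecPart (hN : IsIdealBraceB bi c f γ N) (H : Admissible c f γ bi)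
    {w : ∀ i, BraceVec p (nn i)} : w ∈ hN.vecPart H ↔ ∃ ν, ((w, 0), ν) ∈ N :=
  Iff.rfl

theorem single_sub_act_mem_vecPart (hN : IsIdealBraceB bi c f γ N) (H : Admissible c f γ bi)
    (hx : x ∈ N) (j : Fin s) (z : BraceVec p (nn j)) :
    Pi.single j (z - act c f x j z) ∈ hN.vecPart H := by
  have h := hN.sub_mem H (hN.conj_vec_mem hx (Pi.single j z)) hx
  have hfst : ((fun i => (Pi.single j z : ∀ i, BraceVec p (nn i)) i + x.1.1 i
      - act c f x i ((Pi.single j z : ∀ i, BraceVec p (nn i)) i), x.1.2), x.2).1 - x.1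
      = (Pi.single j (z - act c f x j z), 0) := by
    rw [Pi.single_op (fun i y => y - act c f x i y) (fun i => by simp)]
    refine Prod.ext (funext fun i => ?_) (sub_self _)
    simp only [Prod.fst_sub, Pi.sub_apply]
    abel
  rw [hfst] at h
  exact ⟨_, h⟩

theorem eq_univ (hN : IsIdealBraceB bi c f γ N) (H : Admissible c f γ bi)
    (hγ1 : ∀ i, IsUnit ((γ i : ZMod (l i)) - 1))
    (hV : ∀ i : Fin s, ∀ w : BraceVec p (nn i), ∃ u v : BraceVec p (nn i),
      w = ((c i) u - u) + ((f i) v - v))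
    (hζ : zeta ∈ N) : N = Set.univ := by
  have : Fact (1 < p) := ⟨H.prime.one_lt⟩
  have hf : ∀ j z, Pi.single j (z - f j z) ∈ hN.vecPart H := fun j z => by
    simpa [act, ZMod.val_one] using hN.single_sub_act_mem_vecPart H hζ j z
  have hc : ∀ j z, Pi.single j (z - c j z) ∈ hN.vecPart H := fun j z => by
    have : Fact (1 < l j) := ⟨H.one_lt j⟩
    simpa [act, ZMod.val_one] using hN.single_sub_act_mem_vecPart H
      (hN.vec_zero_mem H hγ1 hζ (Pi.single j 1) 0) j z
  have htop : ∀ w, w ∈ hN.vecPart H := fun w => by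
    rw [← Finset.univ_sum_single w]
    refine AddSubgroup.sum_mem _ fun j _ => ?_
    obtain ⟨u, v, huv⟩ := hV j (w j)
    have hw : (Pi.single j (w j) : ∀ i, BraceVec p (nn i)) =
        -(Pi.single j (u - c j u) + Pi.single j (v - f j v)) := by
      rw [huv, ← Pi.single_add, ← Pi.single_neg]
      abel_nf
    rw [hw]
    exact neg_mem (add_mem (hc j u) (hf j v))
  refine Set.eq_univ_of_forall fun ⟨⟨w, β⟩, ν⟩ => ?_
  obtain ⟨ν₁, hw⟩ := (hN.mem_vecPart H).1 (htop w)
  simpa [H.braceBadd_of_right _ (y := ((0, β), ν - ν₁)) rfl] using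
    hN.braceBadd_mem H hw (hN.vec_zero_mem H hγ1 hζ β (ν - ν₁))

end IsIdealBraceB

namespace BraceB

variable {p s : ℕ} {l nn : Fin s → ℕ}
  (c f : ∀ i : Fin s, AddAut (BraceVec p (nn i)))
  (γ : ∀ i : Fin s, (ZMod (l i))ˣ)
  (bi : ∀ i : Fin s, BraceVec p (nn i) → BraceVec p (nn i) → ZMod p)

theorem isIdealBraceB_setOf_vec_mem (V : ∀ i, AddSubgroup (BraceVec p (nn i)))
    (hV : ∀ i, AddSubgroup.closure {c i, f i} ≤ (V i).autFixingCosets) :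
    IsIdealBraceB bi c f γ {x | ∀ i, x.1.1 i ∈ V i} := by
  have hact (x : BraceB p s l nn) (i : Fin s) : act c f x i ∈ (V i).autFixingCosets :=
    hV i (act_mem_closure c f x i)
  refine ⟨fun i => (V i).zero_mem, fun x hx y hy i => ?_, fun x hx y hxy i => ?_,
    fun g x hx g' hgg' i => ?_, fun g x hx i => ?_⟩
  · exact add_mem (hx i) (AddSubgroup.apply_mem_of_mem_autFixingCosets (hact x i) (hy i))
  · rw [vec_eq_of_braceBmul_eq_zero hxy]
    exact AddSubgroup.apply_mem_of_mem_autFixingCosets (neg_mem (hact x i)) (neg_mem (hx i))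
  · have hk := sub_mem (hact (braceBmul c f γ g x) i) (hact g i)
    have key : (braceBmul c f γ (braceBmul c f γ g x) g').1.1 i = act c f g i (x.1.1 i)
        - ((act c f (braceBmul c f γ g x) i - act c f g i) (g.1.1 i) - g.1.1 i) := by
      rw [braceBmul_eq c f γ _ g']
      dsimp only
      rw [vec_eq_of_braceBmul_eq_zero hgg', sub_eq_add_neg _ (act c f g i),
        AddAut.add_apply, map_neg, map_neg]
      simp only [braceBmul_eq]
      abel
    rw [key]
    exact sub_mem (AddSubgroup.apply_mem_of_mem_autFixingCosets (hact g i) (hx i)) (hk _)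
  · show (lambda c f γ bi g x).1.1 i ∈ V i
    rw [lambda_fst]
    exact AddSubgroup.apply_mem_of_mem_autFixingCosets (hact g i) (hx i)

def IsSimple : Prop :=
  (∃ x : BraceB p s l nn, x ≠ ((0 : BraceT p s l nn), (0 : ZMod p))) ∧
    ∀ N : Set (BraceB p s l nn), IsIdealBraceB bi c f γ N →
      N = {((0 : BraceT p s l nn), (0 : ZMod p))} ∨ N = Set.univ

variable {c f γ bi}

theorem forall_eq_sub_add_sub_of_isSimple [Nontrivial (ZMod p)] (h : IsSimple c f γ bi) :
    ∀ i : Fin s, ∀ w : BraceVec p (nn i), ∃ u v : BraceVec p (nn i),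
      w = ((c i) u - u) + ((f i) v - v) := by
  intro j w
  let V i := (c i).imSubOne ⊔ (f i).imSubOne
  have hV i : AddSubgroup.closure {c i, f i} ≤ (V i).autFixingCosets :=
    (AddSubgroup.closure_le _).2 <| Set.insert_subset_iff.2
      ⟨fun x => AddSubgroup.mem_sup_left ((c i).sub_mem_imSubOne x),
        Set.singleton_subset_iff.2 fun x => AddSubgroup.mem_sup_right ((f i).sub_mem_imSubOne x)⟩
  rcases h.2 _ (isIdealBraceB_setOf_vec_mem c f γ bi V hV) with h0 | huniv
  · have hζ : zeta ∈ {x : BraceB p s l nn | ∀ i, x.1.1 i ∈ V i} :=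
      fun i => (V i).zero_mem
    rw [h0] at hζ
    exact absurd (congrArg Prod.snd hζ) one_ne_zero
  · have hw : ((Pi.single j w, 0), 0) ∈ {x : BraceB p s l nn | ∀ i, x.1.1 i ∈ V i} :=
      huniv ▸ Set.mem_univ _
    obtain ⟨_, ⟨u, rfl⟩, _, ⟨v, rfl⟩, huv⟩ := AddSubgroup.mem_sup.1 (by simpa using hw j)
    exact ⟨u, v, huv.symm⟩

theorem isSimple_of_forall_eq_sub_add_sub (H : Admissible c f γ bi)
    (hdiv : ∀ q : ℕ, q.Prime → q ∣ ∏ i, l i → p ∣ q - 1)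
    (hγ1 : ∀ i, IsUnit ((γ i : ZMod (l i)) - 1))
    (hnd : ∀ i, ∀ u : BraceVec p (nn i), (∀ v, bi i u v = 0) → u = 0)
    (hV : ∀ i : Fin s, ∀ w : BraceVec p (nn i), ∃ u v : BraceVec p (nn i),
      w = ((c i) u - u) + ((f i) v - v)) :
    IsSimple c f γ bi := by
  have : Fact p.Prime := ⟨H.prime⟩
  refine ⟨⟨zeta, fun h => one_ne_zero (congrArg Prod.snd h)⟩,
    fun N hN => or_iff_not_imp_left.2 fun hN0 => ?_⟩
  obtain ⟨x, hx, hx0⟩ : ∃ x ∈ N, x ≠ ((0 : BraceT p s l nn), (0 : ZMod p)) := by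
    by_contra! h
    exact hN0 (Set.eq_singleton_iff_unique_mem.2 ⟨hN.zero_mem, h⟩)
  exact hN.eq_univ H hγ1 hV (hN.zeta_mem H hdiv hnd hx hx0)

end BraceB

/-- the left brace `B = T ⋊∘ Z/(p)` is simple if and only if
`im(c_i − id) + im(f_i − id) = (Z/(p))^{n_i}` for every `i`; in particular `B` is
simple whenever `c_i − id` is invertible for every `i`. -/
theorem braceB_simple_iff
    (p s : ℕ) (l nn : Fin s → ℕ)
    (c f : ∀ i : Fin s, AddAut (BraceVec p (nn i)))
    (γ : ∀ i : Fin s, (ZMod (l i))ˣ)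
    (bi : ∀ i : Fin s, BraceVec p (nn i) → BraceVec p (nn i) → ZMod p)
    (hp : p.Prime) (hl : ∀ i, 1 < l i)
    (hdiv : ∀ q : ℕ, q.Prime → q ∣ ∏ i, l i → p ∣ q - 1)
    (hfo : ∀ i, addOrderOf (f i) = p)
    (hco : ∀ i, addOrderOf (c i) = l i)
    (hγo : ∀ i, orderOf (γ i) = p)
    (hcomm : ∀ i, f i + c i = ((γ i : ZMod (l i)).val) • c i + f i)
    (hγ1 : ∀ i, IsUnit ((γ i : ZMod (l i)) - 1))
    (hbsymm : ∀ i, ∀ u v : BraceVec p (nn i), bi i u v = bi i v u)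
    (hbadd : ∀ i, ∀ u u' v : BraceVec p (nn i), bi i (u + u') v = bi i u v + bi i u' v)
    (hbnd : ∀ i, ∀ u : BraceVec p (nn i), (∀ v, bi i u v = 0) → u = 0)
    (hbc : ∀ i, ∀ u v : BraceVec p (nn i), bi i (c i u) (c i v) = bi i u v)
    (hbf : ∀ i, ∀ u v : BraceVec p (nn i), bi i (f i u) (f i v) = bi i u v) :
    (((∃ x : BraceB p s l nn, x ≠ ((0 : BraceT p s l nn), (0 : ZMod p))) ∧
        ∀ N : Set (BraceB p s l nn), IsIdealBraceB bi c f γ N →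
          N = {((0 : BraceT p s l nn), (0 : ZMod p))} ∨ N = Set.univ) ↔
      (∀ i : Fin s, ∀ w : BraceVec p (nn i), ∃ u v : BraceVec p (nn i),
          w = ((c i) u - u) + ((f i) v - v))) ∧
    ((∀ i : Fin s, Function.Bijective (fun u : BraceVec p (nn i) => (c i) u - u)) →
      ((∃ x : BraceB p s l nn, x ≠ ((0 : BraceT p s l nn), (0 : ZMod p))) ∧
        ∀ N : Set (BraceB p s l nn), IsIdealBraceB bi c f γ N →
          N = {((0 : BraceT p s l nn), (0 : ZMod p))} ∨ N = Set.univ)) := by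
  have H : BraceB.Admissible c f γ bi :=
    ⟨hp, hl, hfo, hco, hγo, hcomm, hbsymm, hbadd, hbc, hbf⟩
  have : Fact p.Prime := ⟨hp⟩
  have key : BraceB.IsSimple c f γ bi ↔ ∀ i : Fin s, ∀ w : BraceVec p (nn i),
      ∃ u v : BraceVec p (nn i), w = ((c i) u - u) + ((f i) v - v) :=
    ⟨BraceB.forall_eq_sub_add_sub_of_isSimple,
      BraceB.isSimple_of_forall_eq_sub_add_sub H hdiv hγ1 hbnd⟩
  refine ⟨key, fun hbij => key.2 fun i w => ?_⟩
  obtain ⟨u, rfl⟩ := (hbij i).2 w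
  exact ⟨u, 0, by simp⟩
end
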